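/- arXiv:2302.00501 — 3 statements merged into one kernel-verified Lean document; each statement's English description precedes it below -/
import Mathlib

section
/- Let p be a monic irreducible polynomial over a field F with p ≠ t, p ≠ t+1, p ≠ t-1, satisfying p♯ = p (p is a palindromial). Then the degree of p is even and p(0) = 1. -/
open Polynomial

/-- The reciprocal polynomial `p♯(t) = p(0)⁻¹ t^(deg p) p(1/t)`. -/
noncomputable def recip {F : Type*} [Field F] (p : F[X]) : F[X] :=
  C (p.coeff 0)⁻¹ * p.reverse

theorem stmt6 {F : Type*} [Field F] (p : F[X]) (hm : p.Monic) (hirr : Irreducible p)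
    (h0 : p.coeff 0 ≠ 0) (hX : p ≠ X) (hX1 : p ≠ X + 1) (hX1' : p ≠ X - 1)
    (hpal : recip p = p) :
    Even p.natDegree ∧ p.coeff 0 = 1 := by
  set n := p.natDegree with hn
  set a := p.coeff 0 with ha
  have hnpos : 0 < n := hirr.natDegree_pos
  -- coefficient relation
  have hco : ∀ i, i ≤ n → p.coeff i = a⁻¹ * p.coeff (n - i) := by
    intro i hi
    conv_lhs => rw [← hpal]
    rw [recip, coeff_C_mul, coeff_reverse, revAt_le hi]
  have hcn : p.coeff n = 1 := hm.coeff_natDegree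
  have hainv : a = a⁻¹ := by simpa [hcn] using hco 0 (Nat.zero_le n)
  have ha2 : a * a = 1 := by
    nth_rewrite 2 [hainv]
    exact mul_inv_cancel₀ h0
  by_cases h1 : a = 1
  · -- palindromic case
    refine ⟨?_, h1⟩
    by_contra hodd
    have hodd : Odd n := Nat.odd_iff.2 (Nat.not_even_iff.1 hodd)
    have hsym : ∀ i, i ≤ n → p.coeff i = p.coeff (n - i) := by
      intro i hi; rw [hco i hi, h1]; simp
    have hev : p.eval (-1 : F) = 0 := by
      rw [eval_eq_sum_range]
      refine Finset.sum_involution (fun i _ => n - i) ?_ ?_ ?_ ?_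
      · intro i hi
        have hi' : i ≤ n := Nat.lt_succ_iff.1 (Finset.mem_range.1 hi)
        rw [hsym i hi']
        have hpar : (-1 : F) ^ i + (-1 : F) ^ (n - i) = 0 := by
          rcases Nat.even_or_odd i with he | ho
          · have : Odd (n - i) := Nat.Odd.sub_even hi' hodd he
            rw [he.neg_one_pow, this.neg_one_pow]; ring
          · have : Even (n - i) := Nat.Odd.sub_odd hodd ho
            rw [ho.neg_one_pow, this.neg_one_pow]; ring
        linear_combination p.coeff (n - i) * hpar
      · intro i hi _
        have hi' : i ≤ n := Nat.lt_succ_iff.1 (Finset.mem_range.1 hi)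
        have := Nat.odd_iff.1 hodd
        show n - i ≠ i
        omega
      · intro i hi
        exact Finset.mem_range.2 (Nat.lt_succ_of_le (Nat.sub_le n i))
      · intro i hi
        have hi' : i ≤ n := Nat.lt_succ_iff.1 (Finset.mem_range.1 hi)
        show n - (n - i) = i
        omega
    have hdvd : (X + 1 : F[X]) ∣ p := by
      have := dvd_iff_isRoot.2 (show p.IsRoot (-1) from hev)
      simpa [sub_neg_eq_add] using this
    have hXirr : Irreducible (X + 1 : F[X]) := by
      have : (X + 1 : F[X]) = X - C (-1) := by simp [sub_neg_eq_add]
      rw [this]; exact irreducible_X_sub_C (-1)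
    have hassoc := hXirr.associated_of_dvd hirr hdvd
    exact hX1 (Polynomial.eq_of_monic_of_associated hm (by simpa using (monic_X_add_C (1 : F))) hassoc.symm)
  · -- anti-palindromic case
    exfalso
    have h1' : a = -1 := by
      rcases mul_eq_zero.1 (show (a - 1) * (a + 1) = 0 by linear_combination ha2) with h | h
      · exact absurd (sub_eq_zero.1 h) h1
      · exact eq_neg_of_add_eq_zero_left h
    have h2 : (2 : F) ≠ 0 := by
      intro h2
      exact h1 (by rw [h1']; linear_combination -h2)
    have hsym : ∀ i, i ≤ n → p.coeff i = -p.coeff (n - i) := by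
      intro i hi; rw [hco i hi, h1']; field_simp
    have hev : p.eval (1 : F) = 0 := by
      rw [eval_eq_sum_range]
      refine Finset.sum_involution (fun i _ => n - i) ?_ ?_ ?_ ?_
      · intro i hi
        have hi' : i ≤ n := Nat.lt_succ_iff.1 (Finset.mem_range.1 hi)
        rw [hsym i hi']; ring
      · intro i hi hne heq
        have hi' : i ≤ n := Nat.lt_succ_iff.1 (Finset.mem_range.1 hi)
        apply hne
        have heq' : n - i = i := heq
        have hc := hsym i hi'
        rw [heq'] at hc
        have hci : p.coeff i = 0 := by
          have h2c : (2 : F) * p.coeff i = 0 := by linear_combination hc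
          exact (mul_eq_zero.1 h2c).resolve_left h2
        simp [hci]
      · intro i hi
        exact Finset.mem_range.2 (Nat.lt_succ_of_le (Nat.sub_le n i))
      · intro i hi
        have hi' : i ≤ n := Nat.lt_succ_iff.1 (Finset.mem_range.1 hi)
        show n - (n - i) = i
        omega
    have hdvd : (X - 1 : F[X]) ∣ p := by
      have := dvd_iff_isRoot.2 (show p.IsRoot 1 from hev)
      simpa using this
    have hXirr : Irreducible (X - 1 : F[X]) := by
      have : (X - 1 : F[X]) = X - C 1 := by simp
      rw [this]; exact irreducible_X_sub_C 1
    have hassoc := hXirr.associated_of_dvd hirr hdvd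
    exact hX1' (Polynomial.eq_of_monic_of_associated hm (by simpa using (monic_X_sub_C (1 : F))) hassoc.symm)
end

section
/- Let V be a finite-dimensional vector space over a field F of characteristic ≠ 2, and let u be a cyclic automorphism of V (i.e., V has a vector x such that x, u(x), u²(x), ... span V) whose minimal polynomial p satisfies p♯ = p. Then u is the product of two involutions in GL(V). More precisely, the unique linear map s with s(u^k(x)) = u^{-k}(x) for all integers k is an involution, and u∘s is an involution. -/
open Polynomial

theorem stmt7 {F V : Type*} [Field F] [AddCommGroup V] [Module F V]
    [FiniteDimensional F V] (hchar : (2 : F) ≠ 0) (u : V ≃ₗ[F] V) (x : V)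
    (hx : Submodule.span F (Set.range fun k : ℕ => (u ^ k) x) = ⊤)
    (h0 : (minpoly F (u.toLinearMap : Module.End F V)).coeff 0 ≠ 0)
    (hpal : recip (minpoly F (u.toLinearMap : Module.End F V)) =
      minpoly F (u.toLinearMap : Module.End F V)) :
    ∃ s : V ≃ₗ[F] V, s * s = 1 ∧ (∀ k : ℤ, s ((u ^ k) x) = (u ^ (-k)) x) ∧
      (u * s) * (u * s) = 1 := by
  set U : Module.End F V := u.toLinearMap with hU
  set Ui : Module.End F V := u.symm.toLinearMap with hUidef
  have hUUi : U * Ui = 1 := by ext v; exact u.apply_symm_apply v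
  have hUiU : Ui * U = 1 := by ext v; exact u.symm_apply_apply v
  have hcomm : Commute Ui U := by unfold Commute SemiconjBy; rw [hUiU, hUUi]
  have hUiUk : ∀ k : ℕ, Ui ^ k * U ^ k = 1 := fun k => by
    rw [← hcomm.mul_pow, hUiU, one_pow]
  have hUUik : ∀ k : ℕ, U ^ k * Ui ^ k = 1 := fun k => by
    rw [← hcomm.symm.mul_pow, hUUi, one_pow]
  set p : F[X] := minpoly F U with hp
  set n : ℕ := p.natDegree with hn
  -- powers of equivalences vs powers of endomorphisms
  have hpowU : ∀ (k : ℕ) (v : V), (u ^ k) v = (U ^ k) v := by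
    intro k
    induction k with
    | zero => intro v; rfl
    | succ m ih =>
      intro v
      rw [pow_succ', pow_succ']
      show u ((u ^ m) v) = U ((U ^ m) v)
      exact congrArg u (ih v)
  have hpowUi : ∀ (k : ℕ) (v : V), (u.symm ^ k) v = (Ui ^ k) v := by
    intro k
    induction k with
    | zero => intro v; rfl
    | succ m ih =>
      intro v
      rw [pow_succ', pow_succ']
      show u.symm ((u.symm ^ m) v) = Ui ((Ui ^ m) v)
      exact congrArg u.symm (ih v)
  -- aeval commutes with powers of U
  have haevalcomm : ∀ (q : F[X]) (k : ℕ),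
      Polynomial.aeval U q * U ^ k = U ^ k * Polynomial.aeval U q := by
    intro q k
    have h1 : Polynomial.aeval U q * U ^ k = Polynomial.aeval U (q * X ^ k) := by
      rw [map_mul, map_pow, Polynomial.aeval_X]
    have h2 : U ^ k * Polynomial.aeval U q = Polynomial.aeval U (X ^ k * q) := by
      rw [map_mul, map_pow, Polynomial.aeval_X]
    rw [h1, h2, mul_comm q]
  -- the evaluation map
  set π : F[X] →ₗ[F] V :=
    { toFun := fun q => Polynomial.aeval U q x
      map_add' := fun a b => by simp
      map_smul' := fun c a => by simp }
    with hπ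
  have hπ_apply : ∀ q : F[X], π q = Polynomial.aeval U q x := fun _ => rfl
  have hπ_pow : ∀ k : ℕ, π (X ^ k) = (u ^ k) x := by
    intro k
    rw [hπ_apply, map_pow, Polynomial.aeval_X, hpowU]
  -- surjectivity
  have hsurj : Function.Surjective π := by
    rw [← LinearMap.range_eq_top]
    rw [← top_le_iff, ← hx, Submodule.span_le]
    rintro v ⟨k, rfl⟩
    exact ⟨X ^ k, hπ_pow k⟩
  -- kernel
  have hker : ∀ q : F[X], π q = 0 → Polynomial.aeval U q = 0 := by
    intro q hq
    apply LinearMap.ext_on hx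
    rintro v ⟨k, rfl⟩
    show Polynomial.aeval U q ((u ^ k) x) = (0 : Module.End F V) ((u ^ k) x)
    rw [LinearMap.zero_apply, hpowU, ← Module.End.mul_apply, haevalcomm,
      Module.End.mul_apply]
    rw [hπ_apply] at hq
    rw [hq, map_zero]
  have hkerdvd : ∀ q : F[X], π q = 0 → p ∣ q := fun q hq => minpoly.dvd F U (hker q hq)
  -- p vanishes at Ui
  have hrev : ∀ f : F[X], f.natDegree ≤ n →
      Polynomial.aeval Ui (f.reflect n) * U ^ n = Polynomial.aeval U f := by
    intro f hf
    refine Polynomial.induction_with_natDegree_le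
      (fun f => Polynomial.aeval Ui (f.reflect n) * U ^ n = Polynomial.aeval U f) n ?_ ?_ ?_ f hf
    · simp
    · intro m r _ hmn
      rw [Polynomial.reflect_C_mul_X_pow, Polynomial.revAt_le hmn]
      rw [map_mul, map_mul, map_pow, map_pow, Polynomial.aeval_C, Polynomial.aeval_C,
        Polynomial.aeval_X, Polynomial.aeval_X]
      rw [mul_assoc]
      congr 1
      have : U ^ n = U ^ (n - m) * U ^ m := by rw [← pow_add, Nat.sub_add_cancel hmn]
      rw [this, ← mul_assoc, hUiUk, one_mul]
    · intro f g _ _ hf hg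
      rw [Polynomial.reflect_add, map_add, add_mul, hf, hg, map_add]
  have hUip : Polynomial.aeval Ui p = 0 := by
    have h1 : Polynomial.aeval Ui p.reverse * U ^ n = Polynomial.aeval U p := by
      exact hrev p le_rfl
    rw [minpoly.aeval] at h1
    have h2 : Polynomial.aeval Ui p.reverse = 0 := by
      have := congrArg (fun A => A * Ui ^ n) h1
      simpa [mul_assoc, hUUik n] using this
    have h3 : p = C (p.coeff 0)⁻¹ * p.reverse := hpal.symm
    calc Polynomial.aeval Ui p = Polynomial.aeval Ui (C (p.coeff 0)⁻¹ * p.reverse) := by rw [← h3]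
      _ = 0 := by rw [map_mul, h2, mul_zero]
  have hUidvd : ∀ q : F[X], p ∣ q → Polynomial.aeval Ui q = 0 := by
    rintro q ⟨t, rfl⟩
    rw [map_mul, hUip, zero_mul]
  -- the polynomial r with aeval U r = Ui
  set r : F[X] := C (-(p.coeff 0)⁻¹) * p.divX with hr
  have haUr : Polynomial.aeval U r * U = 1 := by
    have h1 : Polynomial.aeval U p.divX * U + algebraMap F (Module.End F V) (p.coeff 0) = 0 := by
      calc Polynomial.aeval U p.divX * U + algebraMap F (Module.End F V) (p.coeff 0)
          = Polynomial.aeval U (p.divX * X + C (p.coeff 0)) := by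
            rw [map_add, map_mul, Polynomial.aeval_X, Polynomial.aeval_C]
        _ = Polynomial.aeval U p := by rw [Polynomial.divX_mul_X_add]
        _ = 0 := minpoly.aeval F U
    have h2 : Polynomial.aeval U p.divX * U = -(algebraMap F (Module.End F V) (p.coeff 0)) :=
      eq_neg_of_add_eq_zero_left h1
    show Polynomial.aeval U (C (-(p.coeff 0)⁻¹) * p.divX) * U = 1
    rw [map_mul, Polynomial.aeval_C, mul_assoc, h2]
    rw [← map_neg, ← map_mul, ← map_one (algebraMap F (Module.End F V))]
    congr 1
    rw [neg_mul_neg, inv_mul_cancel₀ h0]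
  have haUr' : Polynomial.aeval U r = Ui := by
    calc Polynomial.aeval U r = Polynomial.aeval U r * (U * Ui) := by rw [hUUi, mul_one]
      _ = (Polynomial.aeval U r * U) * Ui := by rw [mul_assoc]
      _ = Ui := by rw [haUr, one_mul]
  have hdvdrX : p ∣ r * X - 1 := by
    apply minpoly.dvd
    rw [map_sub, map_mul, Polynomial.aeval_X, map_one, haUr, sub_self]
  have haUir : Polynomial.aeval Ui r = U := by
    have h1 : Polynomial.aeval Ui (r * X - 1) = 0 := hUidvd _ hdvdrX
    rw [map_sub, map_mul, Polynomial.aeval_X, map_one, sub_eq_zero] at h1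
    calc Polynomial.aeval Ui r = Polynomial.aeval Ui r * (Ui * U) := by rw [hUiU, mul_one]
      _ = (Polynomial.aeval Ui r * Ui) * U := by rw [mul_assoc]
      _ = U := by rw [h1, one_mul]
  -- the map ψ
  set ψ : F[X] →ₗ[F] V :=
    { toFun := fun q => Polynomial.aeval Ui q x
      map_add' := fun a b => by simp
      map_smul' := fun c a => by simp }
    with hψ
  have hψ_apply : ∀ q : F[X], ψ q = Polynomial.aeval Ui q x := fun _ => rfl
  have hle : LinearMap.ker π ≤ LinearMap.ker ψ := by
    intro q hq
    rw [LinearMap.mem_ker] at hq ⊢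
    rw [hψ_apply, hUidvd q (hkerdvd q hq), LinearMap.zero_apply]
  -- build s₀
  set e : (F[X] ⧸ LinearMap.ker π) ≃ₗ[F] V := π.quotKerEquivOfSurjective hsurj with he
  set ψ' : (F[X] ⧸ LinearMap.ker π) →ₗ[F] V := (LinearMap.ker π).liftQ ψ hle with hψ'
  set s₀ : V →ₗ[F] V := ψ'.comp e.symm.toLinearMap with hs₀
  have he_mk : ∀ q : F[X], e (Submodule.Quotient.mk q) = π q := by
    intro q; rfl
  have hs₀π : ∀ q : F[X], s₀ (π q) = ψ q := by
    intro q
    have h1 : e.symm (π q) = Submodule.Quotient.mk q := by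
      apply e.injective
      rw [LinearEquiv.apply_symm_apply, he_mk]
    show ψ' (e.symm (π q)) = ψ q
    rw [h1]
    exact Submodule.liftQ_apply _ _ _
  -- key computations
  have hA : ∀ k : ℕ, s₀ ((u ^ k) x) = (u.symm ^ k) x := by
    intro k
    rw [← hπ_pow k, hs₀π, hψ_apply, map_pow, Polynomial.aeval_X, hpowUi]
  have hπr : ∀ k : ℕ, π (r ^ k) = (u.symm ^ k) x := by
    intro k
    rw [hπ_apply, map_pow, haUr', hpowUi]
  have hB : ∀ k : ℕ, s₀ ((u.symm ^ k) x) = (u ^ k) x := by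
    intro k
    rw [← hπr k, hs₀π, hψ_apply, map_pow, haUir, hpowU]
  -- s₀ is an involution
  have hinv : s₀.comp s₀ = LinearMap.id := by
    apply LinearMap.ext_on hx
    rintro v ⟨k, rfl⟩
    show s₀ (s₀ ((u ^ k) x)) = (u ^ k) x
    rw [hA, hB]
  set s : V ≃ₗ[F] V := LinearEquiv.ofLinear s₀ s₀ hinv hinv with hs
  have hs_apply : ∀ v : V, s v = s₀ v := fun _ => rfl
  refine ⟨s, ?_, ?_, ?_⟩
  · apply LinearEquiv.toLinearMap_injective
    apply LinearMap.ext
    intro v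
    show s₀ (s₀ v) = v
    exact congrFun (congrArg (fun f => f.toFun) hinv) v
  · -- integer powers
    have hzpow_neg : ∀ m : ℕ, (u ^ (-(m : ℤ)) : V ≃ₗ[F] V) = u.symm ^ m := by
      intro m
      rw [zpow_neg, zpow_natCast, ← inv_pow]
      congr 1
    intro k
    rcases le_or_gt 0 k with hk | hk
    · obtain ⟨m, rfl⟩ := Int.eq_ofNat_of_zero_le hk
      rw [zpow_natCast, hs_apply, hA, hzpow_neg]
    · obtain ⟨m, rfl⟩ : ∃ m : ℕ, k = -(m : ℤ) := ⟨k.natAbs, by omega⟩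
      rw [neg_neg, zpow_natCast, hzpow_neg, hs_apply, hB]
  · -- (u*s)^2 = 1
    have hsus : s * u * s = u⁻¹ := by
      apply LinearEquiv.toLinearMap_injective
      apply LinearMap.ext_on hx
      rintro v ⟨k, rfl⟩
      show s (u (s ((u ^ k) x))) = u⁻¹ ((u ^ k) x)
      rw [hs_apply, hs_apply, hA]
      have hinv_eq : (u⁻¹ : V ≃ₗ[F] V) = u.symm := rfl
      rw [hinv_eq]
      cases k with
      | zero =>
        show s₀ (u x) = u.symm x
        have : u x = (u ^ 1) x := by rw [pow_one]
        rw [this, hA, pow_one]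
      | succ m =>
        have h1 : u ((u.symm ^ (m + 1)) x) = (u.symm ^ m) x := by
          rw [pow_succ']
          show u (u.symm ((u.symm ^ m) x)) = (u.symm ^ m) x
          rw [u.apply_symm_apply]
        have h2 : u.symm ((u ^ (m + 1)) x) = (u ^ m) x := by
          rw [pow_succ']
          show u.symm (u ((u ^ m) x)) = (u ^ m) x
          rw [u.symm_apply_apply]
        rw [h1, hB, h2]
    have : (u * s) * (u * s) = u * (s * u * s) := by
      rw [mul_assoc, mul_assoc s u s]
    rw [this, hsus]
    exact mul_inv_cancel u
end

section
/- Let v be an involutory isometry of H_V^ε on V × V* that exchanges V × {0} and {0} × V*. Then there exists a non-degenerate bilinear form b on V, symmetric if ε = 1 and alternating if ε = -1, such that v = κ(b), where κ(b)(x,φ) = (L_b⁻¹(φ), L_b(x)) and L_b(x) = b(-,x). -/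
/-- The bilinear form `H_V^ε((x,φ),(y,ψ)) = φ(y) + ε ψ(x)` on `V × V*`. -/
def Hform (F : Type*) [Field F] (V : Type*) [AddCommGroup V] [Module F V] (ε : F) :
    LinearMap.BilinForm F (V × Module.Dual F V) :=
  LinearMap.mk₂ F (fun p q => p.2 q.1 + ε * q.2 p.1)
    (fun p p' q => by simp; ring)
    (fun c p q => by simp [smul_eq_mul]; ring)
    (fun p q q' => by simp; ring)
    (fun c p q => by simp [smul_eq_mul]; ring)

/-- The extension `h(u)(x,φ) = (u(x), φ ∘ u⁻¹)` of `u` to `V × V*`. -/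
def hmap {F : Type*} [Field F] {V : Type*} [AddCommGroup V] [Module F V]
    (u : V ≃ₗ[F] V) : (V × Module.Dual F V) ≃ₗ[F] (V × Module.Dual F V) :=
  u.prodCongr u.symm.dualMap

theorem stmt14 {F V : Type*} [Field F] [AddCommGroup V] [Module F V]
    [FiniteDimensional F V] (hchar : (2 : F) ≠ 0) (ε : F) (hε : ε = 1 ∨ ε = -1)
    (v : (V × Module.Dual F V) ≃ₗ[F] (V × Module.Dual F V)) (hv2 : v * v = 1)
    (hiso : ∀ p q, Hform F V ε (v p) (v q) = Hform F V ε p q)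
    (hex1 : Set.image v {p | p.2 = 0} = {p | p.1 = 0})
    (hex2 : Set.image v {p | p.1 = 0} = {p | p.2 = 0}) :
    ∃ b : LinearMap.BilinForm F V, b.Nondegenerate ∧
      (ε = 1 → ∀ x y, b x y = b y x) ∧ (ε = -1 → ∀ x, b x x = 0) ∧
      ∀ (x : V) (φ : Module.Dual F V),
        (v (x, φ)).2 = b.flip x ∧ b.flip ((v (x, φ)).1) = φ := by
  have hvv : ∀ p, v (v p) = p := by
    intro p
    have := DFunLike.congr_fun hv2 p
    simpa using this
  have h1 : ∀ x : V, (v (x, (0 : Module.Dual F V))).1 = 0 := by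
    intro x
    have hm : v (x, (0 : Module.Dual F V)) ∈ Set.image v {p : V × Module.Dual F V | p.2 = 0} :=
      ⟨(x, 0), rfl, rfl⟩
    rw [hex1] at hm
    exact hm
  have h2 : ∀ φ : Module.Dual F V, (v ((0 : V), φ)).2 = 0 := by
    intro φ
    have hm : v ((0 : V), φ) ∈ Set.image v {p : V × Module.Dual F V | p.1 = 0} :=
      ⟨(0, φ), rfl, rfl⟩
    rw [hex2] at hm
    exact hm
  -- the linear map L x = (v (x,0)).2
  set L : V →ₗ[F] Module.Dual F V :=
    (LinearMap.snd F V (Module.Dual F V)) ∘ₗ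
      (v.toLinearMap ∘ₗ LinearMap.inl F V (Module.Dual F V)) with hLdef
  have hLapp : ∀ x : V, L x = (v (x, 0)).2 := fun x => rfl
  -- splitting of v
  have hsplit1 : ∀ (x : V) (φ : Module.Dual F V), (v (x, φ)).1 = (v (0, φ)).1 := by
    intro x φ
    have : (x, φ) = (x, (0 : Module.Dual F V)) + ((0 : V), φ) := by simp
    rw [this, map_add]
    simp [h1 x]
  have hsplit2 : ∀ (x : V) (φ : Module.Dual F V), (v (x, φ)).2 = L x := by
    intro x φ
    have : (x, φ) = (x, (0 : Module.Dual F V)) + ((0 : V), φ) := by simp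
    rw [this, map_add]
    simp [hLapp, h2 φ]
  have hvx0 : ∀ x : V, v (x, (0 : Module.Dual F V)) = (0, L x) := by
    intro x
    exact Prod.ext (h1 x) (hLapp x).symm
  have hv0φ : ∀ φ : Module.Dual F V, v ((0 : V), φ) = ((v (0, φ)).1, 0) := by
    intro φ
    exact Prod.ext rfl (h2 φ)
  -- L ∘ A = id where A φ = (v (0, φ)).1
  have hLA : ∀ φ : Module.Dual F V, L ((v ((0 : V), φ)).1) = φ := by
    intro φ
    have h := hvv ((0 : V), φ)
    rw [hv0φ φ] at h
    have := congrArg Prod.snd h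
    simpa [hLapp] using this
  -- A ∘ L = id
  have hAL : ∀ x : V, (v ((0 : V), L x)).1 = x := by
    intro x
    have h := hvv (x, (0 : Module.Dual F V))
    rw [hvx0 x] at h
    have := congrArg Prod.fst h
    simpa [hsplit1] using this
  -- isometry: L x (A ψ) = ε * ψ x
  have hisoLA : ∀ (x : V) (ψ : Module.Dual F V), L x ((v ((0 : V), ψ)).1) = ε * ψ x := by
    intro x ψ
    have h := hiso (x, (0 : Module.Dual F V)) ((0 : V), ψ)
    rw [hvx0 x, hv0φ ψ] at h
    simpa [Hform, LinearMap.mk₂_apply] using h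
  have hsym : ∀ x y : V, L x y = ε * L y x := by
    intro x y
    have h := hisoLA x (L y)
    rwa [hAL y] at h
  refine ⟨L.flip, ?_, ?_, ?_, ?_⟩
  · refine LinearMap.BilinForm.Nondegenerate.ofSeparatingLeft (fun x hx => ?_)
    have hφ : ∀ φ : Module.Dual F V, φ x = 0 := by
      intro φ
      have := hx ((v ((0 : V), φ)).1)
      rw [LinearMap.flip_apply, hLA φ] at this
      exact this
    exact (Module.forall_dual_apply_eq_zero_iff F x).mp hφ
  · intro hε1 x y
    have := hsym y x
    simp only [LinearMap.flip_apply]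
    rw [this, hε1, one_mul]
  · intro hεm1 x
    have h := hsym x x
    rw [hεm1] at h
    have h2' : (2 : F) * L x x = 0 := by ring_nf; linear_combination h
    have := mul_eq_zero.mp h2'
    simp only [LinearMap.flip_apply]
    rcases this with h | h
    · exact absurd h hchar
    · exact h
  · intro x φ
    constructor
    · rw [hsplit2 x φ]
      ext y
      simp [LinearMap.flip_apply]
    · rw [hsplit1 x φ]
      have := hLA φ
      calc L.flip.flip ((v ((0:V), φ)).1) = L ((v ((0:V), φ)).1) := by
            ext y; simp [LinearMap.flip_apply]
        _ = φ := hLA φ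
end
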